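/- For every l > 0 and all m, n ∈ ℕ with n ≥ m, (1/(2l)) ∫_{-l}^{l} x^{2n} e_{2m,l}(x) dx = √(4m+1) · 2^{2m+1} · l^{2n} · (2n)! · (m+n+1)! / ( (n-m)! · (2(m+n+1))! ), and this quantity is 0 when n < m. -/

import Mathlib

open Polynomial

/-- The `m`-th Legendre polynomial, via Rodrigues' formula. -/
noncomputable def legendre (m : ℕ) : Polynomial ℝ :=
  ((1 : ℝ) / (2 ^ m * m.factorial)) • (Polynomial.derivative^[m] ((X ^ 2 - 1) ^ m))

/-- The rescaled normalized Legendre function `e_{m,l}(x) = √(2m+1) L_m(x/l)`. -/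
noncomputable def eFun (m : ℕ) (l : ℝ) (x : ℝ) : ℝ :=
  Real.sqrt (2 * m + 1) * (legendre m).eval (x / l)

/-!
Substituting `x = l u` reduces the integral to `∫_{-1}^{1} u^{2n} L_{2m}(u) du`. Inserting
Rodrigues' formula and integrating by parts `2m` times (the boundary terms vanish because `±1`
are roots of `(u² - 1)^{2m}` of order `2m`) moves all derivatives onto `u^{2n}`; this kills the
integral when `n < m` and otherwise leaves the Beta-type moment
`∫_{-1}^{1} u^{2j} (u² - 1)^p du`, which one more integration by parts shows to satisfy a
first-order recurrence in `(j, p)`.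
-/

noncomputable def unitIntegral (p : ℝ[X]) : ℝ := ∫ x in (-1 : ℝ)..1, p.eval x

lemma unitIntegral_add (p q : ℝ[X]) : unitIntegral (p + q) = unitIntegral p + unitIntegral q := by
  simp only [unitIntegral, eval_add]
  exact intervalIntegral.integral_add (p.continuous.intervalIntegrable _ _)
    (q.continuous.intervalIntegrable _ _)

lemma unitIntegral_smul (c : ℝ) (p : ℝ[X]) : unitIntegral (c • p) = c * unitIntegral p := by
  simp only [unitIntegral, eval_smul, smul_eq_mul]
  exact intervalIntegral.integral_const_mul c _

lemma unitIntegral_derivative (p : ℝ[X]) :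
    unitIntegral (derivative p) = p.eval 1 - p.eval (-1) :=
  intervalIntegral.integral_deriv_eq_sub' _ (funext fun x => (p.hasDerivAt x).deriv)
    (fun _ _ => p.differentiableAt) (derivative p).continuous.continuousOn

lemma unitIntegral_mul_derivative (p q : ℝ[X]) :
    unitIntegral (p * derivative q) =
      p.eval 1 * q.eval 1 - p.eval (-1) * q.eval (-1) - unitIntegral (derivative p * q) := by
  have h := unitIntegral_derivative (p * q)
  rw [derivative_mul, unitIntegral_add] at h
  simp only [eval_mul] at h
  linarith

lemma unitIntegral_X_pow (k : ℕ) :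
    unitIntegral (X ^ k) = (1 - (-1 : ℝ) ^ (k + 1)) / (k + 1) := by
  simp [unitIntegral, integral_pow]

lemma eval_iterate_derivative_pow_eq_zero {R : Type*} [CommRing R] {q : R[X]} {x : R}
    (hx : q.eval x = 0) {j N : ℕ} (hj : j < N) : (derivative^[j] (q ^ N)).eval x = 0 := by
  obtain ⟨r, hr⟩ := pow_sub_dvd_iterate_derivative_pow q N j
  rw [hr, eval_mul, eval_pow, hx, zero_pow (by omega), zero_mul]

lemma unitIntegral_mul_iterate_derivative_sq_sub_one_pow (N : ℕ) (p : ℝ[X]) {r : ℕ}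
    (hr : r ≤ N) :
    unitIntegral (p * derivative^[N] ((X ^ 2 - 1) ^ N)) =
      (-1) ^ r * unitIntegral (derivative^[r] p * derivative^[N - r] ((X ^ 2 - 1) ^ N)) := by
  induction r with
  | zero => simp
  | succ r ih =>
    have hboundary : ∀ x : ℝ, x ^ 2 = 1 →
        (derivative^[N - (r + 1)] ((X ^ 2 - 1 : ℝ[X]) ^ N)).eval x = 0 := fun x hx =>
      eval_iterate_derivative_pow_eq_zero (by simp [hx]) (by omega)
    rw [ih (by omega), show N - r = N - (r + 1) + 1 by omega, Function.iterate_succ_apply',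
      unitIntegral_mul_derivative, hboundary 1 (by norm_num), hboundary (-1) (by norm_num),
      ← Function.iterate_succ_apply' derivative r p]
    ring

lemma unitIntegral_X_pow_mul_sq_sub_one_pow_succ (j p : ℕ) :
    (2 * j + 1) * unitIntegral (X ^ (2 * j) * (X ^ 2 - 1) ^ (p + 1)) =
      -(2 * p + 2) * unitIntegral (X ^ (2 * (j + 1)) * (X ^ 2 - 1) ^ p) := by
  have hderiv : derivative (X ^ (2 * j + 1) * (X ^ 2 - 1) ^ (p + 1) : ℝ[X]) =
      ((2 * j + 1 : ℝ) • (X ^ (2 * j) * (X ^ 2 - 1) ^ (p + 1)) +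
        (2 * p + 2 : ℝ) • (X ^ (2 * (j + 1)) * (X ^ 2 - 1) ^ p)) := by
    simp only [derivative_mul, derivative_pow, derivative_sub, derivative_one, smul_eq_C_mul]
    simp only [map_add, map_mul, map_natCast, C_ofNat, map_one, Nat.cast_add, Nat.cast_mul,
      Nat.cast_ofNat, Nat.cast_one, Nat.add_sub_cancel, derivative_X, sub_zero]
    ring
  have hzero := unitIntegral_derivative (X ^ (2 * j + 1) * (X ^ 2 - 1) ^ (p + 1))
  simp only [hderiv, unitIntegral_add, unitIntegral_smul, eval_mul, eval_pow, eval_sub, eval_X,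
    eval_one] at hzero
  norm_num at hzero
  linarith

lemma unitIntegral_X_pow_mul_sq_sub_one_pow (p j : ℕ) :
    unitIntegral (X ^ (2 * j) * (X ^ 2 - 1) ^ p) =
      (-1) ^ p * 2 ^ (2 * p + 2) *
        ((p.factorial : ℝ) * ((j + p + 1).factorial : ℝ) * ((2 * j).factorial : ℝ)) /
        ((j.factorial : ℝ) * ((2 * (j + p + 1)).factorial : ℝ)) := by
  induction p generalizing j with
  | zero =>
    rw [pow_zero, mul_one, unitIntegral_X_pow, pow_succ, pow_mul]
    simp only [show 2 * (j + 0 + 1) = 2 * j + 1 + 1 by ring, Nat.factorial_succ, add_zero]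
    push_cast
    field_simp
    ring
  | succ p ih =>
    have hrec := unitIntegral_X_pow_mul_sq_sub_one_pow_succ j p
    rw [ih] at hrec
    rw [← mul_right_inj' (show (2 * j + 1 : ℝ) ≠ 0 by positivity), hrec]
    simp only [show j + 1 + p + 1 = j + (p + 1) + 1 by ring,
      show 2 * (j + 1) = 2 * j + 1 + 1 by ring, Nat.factorial_succ]
    push_cast
    field_simp
    ring

lemma unitIntegral_legendre_eq (N : ℕ) (p : ℝ[X]) :
    unitIntegral (p * legendre N) =
      (-1) ^ N / (2 ^ N * N.factorial) * unitIntegral (derivative^[N] p * (X ^ 2 - 1) ^ N) := by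
  rw [legendre, mul_smul_comm, unitIntegral_smul,
    unitIntegral_mul_iterate_derivative_sq_sub_one_pow N p le_rfl, Nat.sub_self,
    Function.iterate_zero_apply]
  ring

lemma unitIntegral_X_pow_mul_legendre_of_lt {k N : ℕ} (hk : k < N) :
    unitIntegral (X ^ k * legendre N) = 0 := by
  rw [unitIntegral_legendre_eq, iterate_derivative_X_pow_eq_smul,
    Nat.descFactorial_eq_zero_iff_lt.mpr hk]
  simp [unitIntegral]

lemma unitIntegral_X_pow_mul_legendre {m n : ℕ} (h : m ≤ n) :
    unitIntegral (X ^ (2 * n) * legendre (2 * m)) =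
      2 ^ (2 * m + 2) * (((2 * n).factorial : ℝ) * ((m + n + 1).factorial : ℝ))
        / (((n - m).factorial : ℝ) * ((2 * (m + n + 1)).factorial : ℝ)) := by
  have hdesc : ((2 * n).descFactorial (2 * m) : ℝ) * ((2 * (n - m)).factorial : ℝ) =
      ((2 * n).factorial : ℝ) := by
    rw [mul_comm, ← Nat.cast_mul, show 2 * (n - m) = 2 * n - 2 * m by omega,
      Nat.factorial_mul_descFactorial (by omega)]
  rw [unitIntegral_legendre_eq, iterate_derivative_X_pow_eq_smul, smul_mul_assoc,
    unitIntegral_smul, show 2 * n - 2 * m = 2 * (n - m) by omega,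
    unitIntegral_X_pow_mul_sq_sub_one_pow, show n - m + 2 * m + 1 = m + n + 1 by omega, ← hdesc,
    (even_two_mul m).neg_one_pow]
  field_simp
  ring

lemma integral_pow_mul_eFun (k N : ℕ) {l : ℝ} (hl : l ≠ 0) :
    ∫ x in (-l)..l, x ^ k * eFun N l x =
      l ^ (k + 1) * Real.sqrt (2 * N + 1) * unitIntegral (X ^ k * legendre N) := by
  have hscale : ∀ x, x ^ k * eFun N l x =
      l ^ k * Real.sqrt (2 * N + 1) * (X ^ k * legendre N).eval (x / l) := fun x => by
    rw [eFun, eval_mul, eval_pow, eval_X, div_pow]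
    field_simp
  simp only [hscale, intervalIntegral.integral_const_mul,
    intervalIntegral.integral_comp_div (fun u => (X ^ k * legendre N).eval u) hl, neg_div,
    div_self hl, smul_eq_mul, unitIntegral]
  ring

theorem inner_pow_even_eFun_even (l : ℝ) (hl : 0 < l) (m n : ℕ) :
    (m ≤ n →
      (1 / (2 * l)) * ∫ x in (-l)..l, x ^ (2 * n) * eFun (2 * m) l x =
        Real.sqrt (4 * m + 1) * 2 ^ (2 * m + 1) * l ^ (2 * n)
          * (((2 * n).factorial : ℝ) * ((m + n + 1).factorial : ℝ))
          / (((n - m).factorial : ℝ) * ((2 * (m + n + 1)).factorial : ℝ))) ∧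
    (n < m → (1 / (2 * l)) * ∫ x in (-l)..l, x ^ (2 * n) * eFun (2 * m) l x = 0) := by
  rw [integral_pow_mul_eFun _ _ hl.ne',
    show (2 * ((2 * m : ℕ) : ℝ) + 1) = 4 * m + 1 by push_cast; ring]
  refine ⟨fun h => ?_, fun h => ?_⟩
  · rw [unitIntegral_X_pow_mul_legendre h]
    field_simp
    ring
  · rw [unitIntegral_X_pow_mul_legendre_of_lt (by omega)]
    ring
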